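/- arXiv:2510.03814 — 2 statements merged into one kernel-verified Lean document; each statement's English description precedes it below -/
import Mathlib

section
/- The piecewise-linear map T : ℝ² → ℝ² is a bijection of ℝ² if and only if D_L · D_R > 0, i.e., if and only if the determinants of the two branch matrices A_L and A_R are nonzero and have the same sign. -/
/-!
The linear form `φ(q) = d q₁ - c q₂` annihilates the column `(c, d)` shared by `A_L` and `A_R`,
so `φ(A p) = (det A) p₁` for both branches: `φ(T p - h)` is `D_L p₁` on the left half-plane and
`D_R p₁` on the right one.

If `D_L D_R ≤ 0`, then `φ(T p - h)` has constant sign; a surjective `T` would force `φ = 0`,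
i.e. `c = d = 0`, and then `T p` only depends on `p₁`, so `T` is not injective.

If `D_L D_R > 0`, the sign of `φ(q - h) / D_L` tells on which side the preimage of `q` lies,
and `T` is inverted by inverting the corresponding branch.
-/

/-- The 2d continuous piecewise-linear map `T` with left branch matrix
`A_L = [[a_l, c],[b_l, d]]` (for `x ≤ 0`), right branch matrix
`A_R = [[a_r, c],[b_r, d]]` (for `x ≥ 0`), and bias `h = (h₁, h₂)`. -/
noncomputable def Tpl (al ar bl br c d h₁ h₂ : ℝ) : ℝ × ℝ → ℝ × ℝ := fun p =>
  if p.1 ≤ 0 then (al * p.1 + c * p.2 + h₁, bl * p.1 + d * p.2 + h₂)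
  else (ar * p.1 + c * p.2 + h₁, br * p.1 + d * p.2 + h₂)

lemma div_pos_of_mul_pos {α : Type*} [Field α] [LinearOrder α] [IsStrictOrderedRing α] {x y : α}
    (h : 0 < x * y) : 0 < x / y :=
  div_pos_iff.mpr (mul_pos_iff.mp h)

namespace Tpl

/-- The linear map with matrix `[[a, c], [b, d]]`. -/
def lin (a b c d : ℝ) (p : ℝ × ℝ) : ℝ × ℝ := (a * p.1 + c * p.2, b * p.1 + d * p.2)

def colForm (c d : ℝ) (q : ℝ × ℝ) : ℝ := d * q.1 - c * q.2

noncomputable def linInv (a b c d : ℝ) (q : ℝ × ℝ) : ℝ × ℝ :=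
  (colForm c d q / (a * d - b * c), (a * q.2 - b * q.1) / (a * d - b * c))

section Linear

variable {a b c d : ℝ}

lemma colForm_lin (p : ℝ × ℝ) : colForm c d (lin a b c d p) = (a * d - b * c) * p.1 := by
  simp only [colForm, lin]
  ring

lemma linInv_fst (q : ℝ × ℝ) : (linInv a b c d q).1 = colForm c d q / (a * d - b * c) := rfl

lemma lin_linInv (hD : a * d - b * c ≠ 0) (q : ℝ × ℝ) : lin a b c d (linInv a b c d q) = q := by
  ext
  · simp only [lin, linInv, colForm]
    linear_combination q.1 * mul_inv_cancel₀ hD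
  · simp only [lin, linInv, colForm]
    linear_combination q.2 * mul_inv_cancel₀ hD

lemma linInv_lin (hD : a * d - b * c ≠ 0) (p : ℝ × ℝ) : linInv a b c d (lin a b c d p) = p := by
  ext
  · simp only [lin, linInv, colForm]
    linear_combination p.1 * mul_inv_cancel₀ hD
  · simp only [lin, linInv, colForm]
    linear_combination p.2 * mul_inv_cancel₀ hD

lemma eq_zero_of_colForm_nonneg (h : ∀ q, 0 ≤ colForm c d q) : c = 0 ∧ d = 0 := by
  have h' := h (-d, c)
  simp only [colForm] at h'
  constructor <;> nlinarith [sq_nonneg c, sq_nonneg d]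

lemma eq_zero_of_colForm_nonpos (h : ∀ q, colForm c d q ≤ 0) : c = 0 ∧ d = 0 :=
  eq_zero_of_colForm_nonneg fun q => by
    have h' := h (-q)
    simp only [colForm, Prod.fst_neg, Prod.snd_neg] at h' ⊢
    linarith

end Linear

variable {al ar bl br c d h₁ h₂ : ℝ}

lemma apply_of_nonpos {p : ℝ × ℝ} (hp : p.1 ≤ 0) :
    Tpl al ar bl br c d h₁ h₂ p = lin al bl c d p + (h₁, h₂) := by
  simp only [Tpl, if_pos hp, lin, Prod.mk_add_mk]

lemma apply_of_pos {p : ℝ × ℝ} (hp : 0 < p.1) :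
    Tpl al ar bl br c d h₁ h₂ p = lin ar br c d p + (h₁, h₂) := by
  simp only [Tpl, if_neg hp.not_ge, lin, Prod.mk_add_mk]

lemma colForm_sub_bias (p : ℝ × ℝ) :
    colForm c d (Tpl al ar bl br c d h₁ h₂ p - (h₁, h₂)) =
      (if p.1 ≤ 0 then al * d - bl * c else ar * d - br * c) * p.1 := by
  split_ifs with hp
  · rw [apply_of_nonpos hp, add_sub_cancel_right, colForm_lin]
  · rw [apply_of_pos (not_le.mp hp), add_sub_cancel_right, colForm_lin]

lemma colForm_sub_bias_nonneg (hL : al * d - bl * c ≤ 0) (hR : 0 ≤ ar * d - br * c)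
    (p : ℝ × ℝ) : 0 ≤ colForm c d (Tpl al ar bl br c d h₁ h₂ p - (h₁, h₂)) := by
  rw [colForm_sub_bias]
  split_ifs with hp
  · exact mul_nonneg_of_nonpos_of_nonpos hL hp
  · exact mul_nonneg hR (not_le.mp hp).le

lemma colForm_sub_bias_nonpos (hL : 0 ≤ al * d - bl * c) (hR : ar * d - br * c ≤ 0)
    (p : ℝ × ℝ) : colForm c d (Tpl al ar bl br c d h₁ h₂ p - (h₁, h₂)) ≤ 0 := by
  rw [colForm_sub_bias]
  split_ifs with hp
  · exact mul_nonpos_of_nonneg_of_nonpos hL hp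
  · exact mul_nonpos_of_nonpos_of_nonneg hR (not_le.mp hp).le

lemma not_bijective_of_det_mul_nonpos (hD : (al * d - bl * c) * (ar * d - br * c) ≤ 0) :
    ¬ Function.Bijective (Tpl al ar bl br c d h₁ h₂) := by
  rintro ⟨hinj, hsurj⟩
  have hsurj' (q : ℝ × ℝ) : ∃ p, Tpl al ar bl br c d h₁ h₂ p - (h₁, h₂) = q :=
    (hsurj (q + (h₁, h₂))).imp fun p hp => by rw [hp, add_sub_cancel_right]
  have hcd : c = 0 ∧ d = 0 := by
    rcases mul_nonpos_iff.mp hD with ⟨hL, hR⟩ | ⟨hL, hR⟩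
    · refine eq_zero_of_colForm_nonpos fun q => ?_
      obtain ⟨p, rfl⟩ := hsurj' q
      exact colForm_sub_bias_nonpos hL hR p
    · refine eq_zero_of_colForm_nonneg fun q => ?_
      obtain ⟨p, rfl⟩ := hsurj' q
      exact colForm_sub_bias_nonneg hL hR p
  obtain ⟨rfl, rfl⟩ := hcd
  have hcollapse : Tpl al ar bl br 0 0 h₁ h₂ (0, 0) = Tpl al ar bl br 0 0 h₁ h₂ (0, 1) := by
    simp [Tpl]
  simpa using hinj hcollapse

noncomputable def inv (al ar bl br c d h₁ h₂ : ℝ) (q : ℝ × ℝ) : ℝ × ℝ :=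
  if (linInv al bl c d (q - (h₁, h₂))).1 ≤ 0 then linInv al bl c d (q - (h₁, h₂))
  else linInv ar br c d (q - (h₁, h₂))

lemma inv_leftInverse (hD : 0 < (al * d - bl * c) * (ar * d - br * c)) :
    Function.LeftInverse (inv al ar bl br c d h₁ h₂) (Tpl al ar bl br c d h₁ h₂) := by
  intro p
  rcases le_or_gt p.1 0 with hp | hp
  · rw [apply_of_nonpos hp, inv, add_sub_cancel_right, linInv_lin (left_ne_zero_of_mul hD.ne'),
      if_pos hp]
  · have hside : 0 < (linInv al bl c d (lin ar br c d p)).1 := by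
      rw [linInv_fst, colForm_lin, mul_comm, mul_div_assoc]
      exact mul_pos hp (div_pos_of_mul_pos (by rwa [mul_comm]))
    rw [apply_of_pos hp, inv, add_sub_cancel_right, if_neg hside.not_ge,
      linInv_lin (right_ne_zero_of_mul hD.ne')]

lemma inv_rightInverse (hD : 0 < (al * d - bl * c) * (ar * d - br * c)) :
    Function.RightInverse (inv al ar bl br c d h₁ h₂) (Tpl al ar bl br c d h₁ h₂) := by
  have hL : al * d - bl * c ≠ 0 := left_ne_zero_of_mul hD.ne'
  intro q
  by_cases hq : (linInv al bl c d (q - (h₁, h₂))).1 ≤ 0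
  · rw [inv, if_pos hq, apply_of_nonpos hq, lin_linInv hL, sub_add_cancel]
  · have hside : 0 < (linInv ar br c d (q - (h₁, h₂))).1 := by
      have hφ := not_le.mp hq
      rw [linInv_fst] at hφ ⊢
      rw [← div_mul_div_cancel₀ hL]
      exact mul_pos hφ (div_pos_of_mul_pos hD)
    rw [inv, if_neg hq, apply_of_pos hside, lin_linInv (right_ne_zero_of_mul hD.ne'),
      sub_add_cancel]

end Tpl

/-- The piecewise-linear map `T` is a bijection of `ℝ²` iff
`D_L · D_R > 0` where `D_L = det A_L` and `D_R = det A_R`. -/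
theorem stmt_3 (al ar bl br c d h₁ h₂ : ℝ) :
    Function.Bijective (Tpl al ar bl br c d h₁ h₂) ↔
      (al * d - bl * c) * (ar * d - br * c) > 0 :=
  ⟨fun hbij => not_le.mp fun hD => Tpl.not_bijective_of_det_mul_nonpos hD hbij,
    fun hD => Function.bijective_iff_has_inverse.mpr
      ⟨_, Tpl.inv_leftInverse hD, Tpl.inv_rightInverse hD⟩⟩
end

section
/- Set Δ = (a_r·d − b_r·c)·(a_l·d − b_l·c) − c·(b_l + b_r) − d² − a_l·a_r + 1 and assume Δ ≠ 0 (equivalently, det(I − A_L·A_R) ≠ 0). Then there exists a unique pair of points (p, q) in ℝ² with q = A_R·p + h and p = A_L·q + h (a 2-cycle of the pair of affine branches), and their first coordinates are p₁ = ((1 − d)·h₁ + c·h₂)·(a_l + d + a_l·d − b_l·c + 1)/Δ and q₁ = ((1 − d)·h₁ + c·h₂)·(a_r + d + a_r·d − b_r·c + 1)/Δ. -/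
/-!
Substituting one branch into the other, `p` is a fixed point of the affine map
`p ↦ A_L (A_R p + h) + h`, i.e. `(I - A_L A_R) p = (A_L + I) h`, a 2 × 2 linear system of
determinant `Δ`; Cramer's rule gives `p` uniquely, and `q = A_R p + h`. The first coordinate of
`q` needs no separate computation: `q` is a fixed point of `A_R (A_L q + h) + h`, the same
system with the two branches exchanged, and `Δ` is symmetric under that exchange.
-/

section LinearSystem

variable {K : Type*} [Field K] {a b c d r s : K}

theorem linearSystem_fst_eq (h : a * d - b * c ≠ 0) {x y : K}
    (h₁ : a * x + b * y = r) (h₂ : c * x + d * y = s) :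
    x = (r * d - b * s) / (a * d - b * c) := by
  rw [eq_div_iff h]
  linear_combination d * h₁ - b * h₂

theorem linearSystem_snd_eq (h : a * d - b * c ≠ 0) {x y : K}
    (h₁ : a * x + b * y = r) (h₂ : c * x + d * y = s) :
    y = (a * s - r * c) / (a * d - b * c) := by
  rw [eq_div_iff h]
  linear_combination a * h₂ - c * h₁

theorem existsUnique_linearSystem (h : a * d - b * c ≠ 0) :
    ∃! v : K × K, a * v.1 + b * v.2 = r ∧ c * v.1 + d * v.2 = s := by
  refine ⟨((r * d - b * s) / (a * d - b * c), (a * s - r * c) / (a * d - b * c)), ?_, ?_⟩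
  · constructor <;> (rw [mul_div_assoc', mul_div_assoc', ← add_div, div_eq_iff h]; ring)
  · rintro ⟨x, y⟩ ⟨h₁, h₂⟩
    exact Prod.ext (linearSystem_fst_eq h h₁ h₂) (linearSystem_snd_eq h h₁ h₂)

end LinearSystem

section TwoCycle

variable {K : Type*} [Field K]

def affineBranch (a b c d h₁ h₂ : K) (p : K × K) : K × K :=
  (a * p.1 + c * p.2 + h₁, b * p.1 + d * p.2 + h₂)

def twoCycleDet (al ar bl br c d : K) : K :=
  (ar * d - br * c) * (al * d - bl * c) - c * (bl + br) - d ^ 2 - al * ar + 1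

theorem twoCycleDet_comm (al ar bl br c d : K) :
    twoCycleDet ar al br bl c d = twoCycleDet al ar bl br c d := by
  unfold twoCycleDet
  ring

variable {al ar bl br c d h₁ h₂ : K}

theorem affineBranch_comp_eq_self_iff {p : K × K} :
    affineBranch al bl c d h₁ h₂ (affineBranch ar br c d h₁ h₂ p) = p ↔
      (1 - al * ar - c * br) * p.1 + -(al * c + c * d) * p.2 = (al + 1) * h₁ + c * h₂ ∧
      -(bl * ar + d * br) * p.1 + (1 - bl * c - d ^ 2) * p.2 = bl * h₁ + (d + 1) * h₂ := by
  simp only [affineBranch, Prod.ext_iff]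
  constructor <;> rintro ⟨e₁, e₂⟩ <;> constructor
  · linear_combination -e₁
  · linear_combination -e₂
  · linear_combination -e₁
  · linear_combination -e₂

theorem existsUnique_affineBranch_comp_eq_self (hΔ : twoCycleDet al ar bl br c d ≠ 0) :
    ∃! p : K × K, affineBranch al bl c d h₁ h₂ (affineBranch ar br c d h₁ h₂ p) = p := by
  simp only [affineBranch_comp_eq_self_iff]
  refine existsUnique_linearSystem ?_
  convert hΔ using 1
  unfold twoCycleDet
  ring

theorem fst_eq_of_affineBranch_comp_eq_self (hΔ : twoCycleDet al ar bl br c d ≠ 0) {p : K × K}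
    (hp : affineBranch al bl c d h₁ h₂ (affineBranch ar br c d h₁ h₂ p) = p) :
    p.1 = ((1 - d) * h₁ + c * h₂) * (al + d + al * d - bl * c + 1) / twoCycleDet al ar bl br c d := by
  have hdet : (1 - al * ar - c * br) * (1 - bl * c - d ^ 2) - -(al * c + c * d) * -(bl * ar + d * br)
      = twoCycleDet al ar bl br c d := by
    unfold twoCycleDet
    ring
  obtain ⟨e₁, e₂⟩ := affineBranch_comp_eq_self_iff.mp hp
  rw [linearSystem_fst_eq (hdet ▸ hΔ) e₁ e₂, hdet]
  ring

theorem isTwoCycle_iff {p q : K × K} :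
    (q = affineBranch ar br c d h₁ h₂ p ∧ p = affineBranch al bl c d h₁ h₂ q) ↔
      affineBranch al bl c d h₁ h₂ (affineBranch ar br c d h₁ h₂ p) = p ∧
        q = affineBranch ar br c d h₁ h₂ p := by
  constructor
  · rintro ⟨rfl, hp⟩
    exact ⟨hp.symm, rfl⟩
  · rintro ⟨hp, rfl⟩
    exact ⟨rfl, hp.symm⟩

end TwoCycle

/-- If `Δ = (a_r d - b_r c)(a_l d - b_l c) - c(b_l + b_r) - d² - a_l a_r + 1 ≠ 0`
then there is a unique pair `(p, q)` with `q = A_R·p + h` and `p = A_L·q + h`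
(a 2-cycle of the two affine branches), whose first coordinates are given by the
closed-form expressions. -/
theorem stmt_15 (al ar bl br c d h₁ h₂ : ℝ)
    (hΔ : (ar * d - br * c) * (al * d - bl * c) - c * (bl + br) - d ^ 2 - al * ar + 1 ≠ 0) :
    (∃! pq : (ℝ × ℝ) × (ℝ × ℝ),
        pq.2 = (ar * pq.1.1 + c * pq.1.2 + h₁, br * pq.1.1 + d * pq.1.2 + h₂) ∧
        pq.1 = (al * pq.2.1 + c * pq.2.2 + h₁, bl * pq.2.1 + d * pq.2.2 + h₂)) ∧
    (∀ pq : (ℝ × ℝ) × (ℝ × ℝ),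
      (pq.2 = (ar * pq.1.1 + c * pq.1.2 + h₁, br * pq.1.1 + d * pq.1.2 + h₂) ∧
       pq.1 = (al * pq.2.1 + c * pq.2.2 + h₁, bl * pq.2.1 + d * pq.2.2 + h₂)) →
      pq.1.1 = ((1 - d) * h₁ + c * h₂) * (al + d + al * d - bl * c + 1)
          / ((ar * d - br * c) * (al * d - bl * c) - c * (bl + br) - d ^ 2 - al * ar + 1) ∧
      pq.2.1 = ((1 - d) * h₁ + c * h₂) * (ar + d + ar * d - br * c + 1)
          / ((ar * d - br * c) * (al * d - bl * c) - c * (bl + br) - d ^ 2 - al * ar + 1)) := by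
  change twoCycleDet al ar bl br c d ≠ 0 at hΔ
  have hΔ' : twoCycleDet ar al br bl c d ≠ 0 := twoCycleDet_comm al ar bl br c d ▸ hΔ
  refine ⟨?_, fun pq hpq => ?_⟩
  · obtain ⟨p, hp, hp_unique⟩ := existsUnique_affineBranch_comp_eq_self (h₁ := h₁) (h₂ := h₂) hΔ
    refine ⟨(p, affineBranch ar br c d h₁ h₂ p), isTwoCycle_iff.mpr ⟨hp, rfl⟩, fun pq hpq => ?_⟩
    obtain ⟨hp', hq'⟩ := isTwoCycle_iff.mp hpq
    have hpq₁ : pq.1 = p := hp_unique pq.1 hp'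
    exact Prod.ext hpq₁ (hpq₁ ▸ hq')
  obtain ⟨hp, hq⟩ := isTwoCycle_iff.mp hpq
  have hq_fixed : affineBranch ar br c d h₁ h₂ (affineBranch al bl c d h₁ h₂ pq.2) = pq.2 := by
    rw [hq, hp]
  refine ⟨fst_eq_of_affineBranch_comp_eq_self hΔ hp, ?_⟩
  rw [fst_eq_of_affineBranch_comp_eq_self hΔ' hq_fixed, twoCycleDet_comm]
  rfl
end
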